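/- Let p be a prime and let e ≥ 1 and r ≥ 1 be integers. Then the natural action of GL_r(ℤ/p^eℤ) on (ℤ/p^eℤ)^r (by matrix-vector multiplication) has exactly e + 1 distinct orbits. -/

import Mathlib

/-!
Write a vector as `p ^ k • w` with some entry of `w` a unit, `k` the least `p`-adic valuation of its
entries. A matrix with `w` as a column, composed with a transposition, maps `p ^ k • eᵢ` to it, so
every orbit contains some `p ^ k • eᵢ` with `k ≤ e`. These are pairwise in different orbits
because a vector's annihilator is an orbit invariant, and `p ^ (e - k)` kills `p ^ k' • eᵢ` only
when `k ≤ k'`.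
-/

/-- The orbit of a vector `v ∈ (ℤ/mℤ)^r` under the natural action of `GL_r(ℤ/mℤ)`
by matrix-vector multiplication. -/
def glOrbit (m r : ℕ) (v : Fin r → ZMod m) : Set (Fin r → ZMod m) :=
  {w | ∃ A : GL (Fin r) (ZMod m), (A : Matrix (Fin r) (Fin r) (ZMod m)).mulVec v = w}

open Matrix

section glOrbit

variable {m r : ℕ}

lemma mem_glOrbit_self (v : Fin r → ZMod m) : v ∈ glOrbit m r v :=
  ⟨1, by simp⟩

lemma mem_glOrbit_trans {u v w : Fin r → ZMod m} (hv : v ∈ glOrbit m r u)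
    (hw : w ∈ glOrbit m r v) : w ∈ glOrbit m r u := by
  obtain ⟨A, rfl⟩ := hv
  obtain ⟨B, rfl⟩ := hw
  exact ⟨B * A, by rw [Units.val_mul, ← mulVec_mulVec]⟩

lemma mem_glOrbit_symm {v w : Fin r → ZMod m} (h : w ∈ glOrbit m r v) : v ∈ glOrbit m r w := by
  obtain ⟨A, rfl⟩ := h
  exact ⟨A⁻¹, by rw [mulVec_mulVec, ← Units.val_mul, inv_mul_cancel, Units.val_one, one_mulVec]⟩

lemma glOrbit_eq_of_mem {v w : Fin r → ZMod m} (h : w ∈ glOrbit m r v) :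
    glOrbit m r w = glOrbit m r v :=
  Set.ext fun _ => ⟨mem_glOrbit_trans h, mem_glOrbit_trans (mem_glOrbit_symm h)⟩

lemma smul_eq_zero_of_mem_glOrbit {v w : Fin r → ZMod m} {c : ZMod m} (h : w ∈ glOrbit m r v)
    (hc : c • v = 0) : c • w = 0 := by
  obtain ⟨A, rfl⟩ := h
  rw [← mulVec_smul, hc, mulVec_zero]

lemma single_mem_glOrbit_single (i j : Fin r) (c : ZMod m) :
    Pi.single j c ∈ glOrbit m r (Pi.single i c) := by
  have hσ : IsUnit ((Equiv.swap i j).permMatrix (ZMod m)) := by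
    rw [Matrix.isUnit_iff_isUnit_det, det_permutation]
    exact (Equiv.swap i j).sign.isUnit.map (Int.castRingHom _)
  refine ⟨hσ.unit, ?_⟩
  ext k
  simp [Pi.single_apply, Equiv.swap_apply_eq_iff]

lemma smul_mem_glOrbit_single_of_isUnit {w : Fin r → ZMod m} {j : Fin r} (hw : IsUnit (w j))
    (c : ZMod m) : c • w ∈ glOrbit m r (Pi.single j c) := by
  have hdet : (updateCol 1 j w).det = w j := by
    rw [← cramer_apply, cramer_one]; rfl
  have hB : IsUnit (updateCol (1 : Matrix (Fin r) (Fin r) (ZMod m)) j w) := by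
    rwa [Matrix.isUnit_iff_isUnit_det, hdet]
  refine ⟨hB.unit, ?_⟩
  ext i
  simp [mul_comm]

end glOrbit

namespace ZMod

lemma natCast_pow_eq_zero_iff {p : ℕ} (hp : 1 < p) {e n : ℕ} :
    (p : ZMod (p ^ e)) ^ n = 0 ↔ e ≤ n := by
  rw [← Nat.cast_pow, natCast_eq_zero_iff, Nat.pow_dvd_pow_iff_le_right hp]

lemma exists_eq_pow_mul_of_isUnit {p : ℕ} (hp : p.Prime) {e : ℕ} (x : ZMod (p ^ e)) :
    ∃ k ≤ e, ∃ u : ZMod (p ^ e), IsUnit u ∧ x = (p : ZMod (p ^ e)) ^ k * u := by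
  by_cases hx : x = 0
  · refine ⟨e, le_rfl, 1, isUnit_one, ?_⟩
    rw [hx, (natCast_pow_eq_zero_iff hp.one_lt).2 le_rfl, zero_mul]
  have : NeZero (p ^ e) := ⟨pow_ne_zero e hp.ne_zero⟩
  obtain ⟨k, n, hpn, hval⟩ := Nat.exists_eq_pow_mul_and_not_dvd ((val_ne_zero x).2 hx) p hp.ne_one
  have hx' : x = (p : ZMod (p ^ e)) ^ k * n := by
    rw [← natCast_zmod_val x, hval]; push_cast; rfl
  have hn : IsUnit (n : ZMod (p ^ e)) :=
    (isUnit_iff_coprime n _).2 ((hp.coprime_iff_not_dvd.2 hpn).symm.pow_right e)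
  refine ⟨k, ?_, n, hn, hx'⟩
  by_contra hk
  rw [(natCast_pow_eq_zero_iff hp.one_lt).2 (by omega), zero_mul] at hx'
  exact hx hx'

end ZMod

lemma exists_eq_pow_smul_of_isUnit_apply {p : ℕ} (hp : p.Prime) {e : ℕ} {ι : Type*} [Fintype ι]
    [Nonempty ι] (v : ι → ZMod (p ^ e)) :
    ∃ k ≤ e, ∃ w : ι → ZMod (p ^ e), ∃ j, IsUnit (w j) ∧ v = (p : ZMod (p ^ e)) ^ k • w := by
  choose κ hκ u hu hvu using fun i => ZMod.exists_eq_pow_mul_of_isUnit hp (v i)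
  obtain ⟨j, -, hj⟩ := Finset.exists_min_image Finset.univ κ Finset.univ_nonempty
  refine ⟨κ j, hκ j, fun i => (p : ZMod (p ^ e)) ^ (κ i - κ j) * u i, j, by simpa using hu j, ?_⟩
  ext i
  rw [hvu i, Pi.smul_apply, smul_eq_mul, ← mul_assoc, ← pow_add,
    Nat.add_sub_cancel' (hj i (Finset.mem_univ i))]

lemma exists_mem_glOrbit_single_pow {p : ℕ} (hp : p.Prime) {e r : ℕ} (i : Fin r)
    (v : Fin r → ZMod (p ^ e)) :
    ∃ k ≤ e, v ∈ glOrbit (p ^ e) r (Pi.single i ((p : ZMod (p ^ e)) ^ k)) := by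
  have : Nonempty (Fin r) := ⟨i⟩
  obtain ⟨k, hk, w, j, hw, rfl⟩ := exists_eq_pow_smul_of_isUnit_apply hp v
  exact ⟨k, hk, mem_glOrbit_trans (single_mem_glOrbit_single i j _)
    (smul_mem_glOrbit_single_of_isUnit hw _)⟩

lemma le_of_single_pow_mem_glOrbit {p : ℕ} (hp : 1 < p) {e r : ℕ} {i : Fin r} {k k' : ℕ}
    (hk' : k' ≤ e) (h : Pi.single i ((p : ZMod (p ^ e)) ^ k) ∈
      glOrbit (p ^ e) r (Pi.single i ((p : ZMod (p ^ e)) ^ k'))) : k' ≤ k := by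
  have hkill : (p : ZMod (p ^ e)) ^ (e - k') • Pi.single i ((p : ZMod (p ^ e)) ^ k') = 0 := by
    rw [← Pi.single_smul, smul_eq_mul, ← pow_add, (ZMod.natCast_pow_eq_zero_iff hp).2 (by omega),
      Pi.single_zero]
  have h0 := congrFun (smul_eq_zero_of_mem_glOrbit h hkill) i
  rw [Pi.smul_apply, Pi.single_eq_same, Pi.zero_apply, smul_eq_mul, ← pow_add,
    ZMod.natCast_pow_eq_zero_iff hp] at h0
  omega

lemma glOrbit_single_pow_injective {p : ℕ} (hp : 1 < p) {e r : ℕ} (i : Fin r) :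
    Function.Injective fun k : Fin (e + 1) =>
      glOrbit (p ^ e) r (Pi.single i ((p : ZMod (p ^ e)) ^ (k : ℕ))) := by
  intro a b hab
  simp only at hab
  have hab' := hab ▸ mem_glOrbit_self (Pi.single i ((p : ZMod (p ^ e)) ^ (a : ℕ)))
  have hba' := hab.symm ▸ mem_glOrbit_self (Pi.single i ((p : ZMod (p ^ e)) ^ (b : ℕ)))
  exact Fin.ext (le_antisymm (le_of_single_pow_mem_glOrbit hp (by omega) hba')
    (le_of_single_pow_mem_glOrbit hp (by omega) hab'))

theorem card_gl_orbits_prime_power_general (p e r : ℕ) (hp : p.Prime) (hr : 1 ≤ r) :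
    Nat.card {S : Set (Fin r → ZMod (p ^ e)) //
        ∃ v : Fin r → ZMod (p ^ e), S = glOrbit (p ^ e) r v} = e + 1 := by
  let i : Fin r := ⟨0, hr⟩
  let orbitOfExponent (k : Fin (e + 1)) :
      {S : Set (Fin r → ZMod (p ^ e)) // ∃ v, S = glOrbit (p ^ e) r v} :=
    ⟨glOrbit (p ^ e) r (Pi.single i ((p : ZMod (p ^ e)) ^ (k : ℕ))), _, rfl⟩
  have hbij : Function.Bijective orbitOfExponent := by
    refine ⟨fun a b h => glOrbit_single_pow_injective hp.one_lt i (congrArg Subtype.val h), ?_⟩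
    rintro ⟨S, v, rfl⟩
    obtain ⟨k, hk, hv⟩ := exists_mem_glOrbit_single_pow hp i v
    exact ⟨⟨k, by omega⟩, Subtype.ext (glOrbit_eq_of_mem hv).symm⟩
  rw [← Nat.card_eq_of_bijective orbitOfExponent hbij, Nat.card_fin]

/-- For a prime `p` and integers `e ≥ 1`, `r ≥ 1`, the natural action of
`GL_r(ℤ/p^eℤ)` on `(ℤ/p^eℤ)^r` has exactly `e + 1` distinct orbits. -/
theorem card_gl_orbits_prime_power (p e r : ℕ) (hp : p.Prime) (he : 1 ≤ e) (hr : 1 ≤ r) :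
    Nat.card {S : Set (Fin r → ZMod (p ^ e)) //
        ∃ v : Fin r → ZMod (p ^ e), S = glOrbit (p ^ e) r v} = e + 1 :=
  card_gl_orbits_prime_power_general p e r hp hr
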